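/- arXiv:1208.3939 — 2 statements merged into one kernel-verified Lean document; each statement's English description precedes it below -/
import Mathlib

section
/- The linear mechanism on [L,H] is 1/(H-L)-strongly truthful: for all v, ṽ ∈ [L,H], u_v(v) - u_v(ṽ) ≥ (1/(2(H-L)))·(ṽ - v)². -/
/-! The loss from misreporting, `u_v(v) - u_v(ṽ) = u(v) - u(ṽ) - (v - ṽ)·u'(ṽ)`, is the Bregman
divergence of the truthful utility `u`, whose derivative is the allocation `a`. For the linear
mechanism `u` is a parabola of curvature `1/(H-L)`, so this divergence is exactly
`(ṽ - v)²/(2(H-L))` and the strong-truthfulness bound holds with equality. -/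

noncomputable section

namespace LinearMechanism

def allocation (L H v : ℝ) : ℝ := (v - L) / (H - L)

def utility (L H v : ℝ) : ℝ := (v - L) ^ 2 / (2 * (H - L))

def reportUtility (L H v w : ℝ) : ℝ := (v - w) * allocation L H w + utility L H w

theorem reportUtility_self_sub (L H v w : ℝ) :
    reportUtility L H v v - reportUtility L H v w = (w - v) ^ 2 / (2 * (H - L)) := by
  simp only [reportUtility, allocation, utility, div_eq_mul_inv, mul_inv]
  ring

end LinearMechanism

end

open LinearMechanism in
theorem linear_mechanism_strongly_truthful_general
    (L H : ℝ)
    (uv : ℝ → ℝ → ℝ)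
    (huv : ∀ v w : ℝ, uv v w =
      (v - w) * ((w - L) / (H - L)) + (w - L) ^ 2 / (2 * (H - L))) :
    ∀ v ∈ Set.Icc L H, ∀ w ∈ Set.Icc L H,
      uv v v - uv v w ≥ 1 / (2 * (H - L)) * (w - v) ^ 2 := by
  intro v _ w _
  have huv_eq : uv = reportUtility L H := funext₂ huv
  rw [huv_eq, reportUtility_self_sub, one_div_mul_eq_div]

/-- The linear mechanism on `[L,H]` is `1/(H-L)`-strongly truthful:
with `u_v(w) = (v - w)·a(w) + u(w)` where `a(w) = (w-L)/(H-L)` and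
`u(w) = (w-L)²/(2(H-L))`, for all `v, w ∈ [L,H]`,
`u_v(v) - u_v(w) ≥ (w-v)²/(2(H-L))`. -/
theorem linear_mechanism_strongly_truthful
    (L H : ℝ) (hLH : L < H)
    (uv : ℝ → ℝ → ℝ)
    (huv : ∀ v w : ℝ, uv v w =
      (v - w) * ((w - L) / (H - L)) + (w - L) ^ 2 / (2 * (H - L))) :
    ∀ v ∈ Set.Icc L H, ∀ w ∈ Set.Icc L H,
      uv v v - uv v w ≥ 1 / (2 * (H - L)) * (w - v) ^ 2 :=
  linear_mechanism_strongly_truthful_general L H uv huv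
end

section
/- If M is a strictly truthful single-agent multi-alternative mechanism, then the scoring rule S(M) defined by s_i(p) = a_i(p) - P(p) for i ≥ 1 and s_0(p) = -P(p) is strictly proper: the forecaster's expected score Σ_{i≥0} p_i s_i(p̃) is strictly maximized at p̃ = p. -/
theorem Finset.sum_mul_sub_add_one_sub_sum_mul_neg {ι R : Type*} [CommRing R]
    (t : Finset ι) (p a : ι → R) (c : R) :
    ∑ i ∈ t, p i * (a i - c) + (1 - ∑ i ∈ t, p i) * -c = ∑ i ∈ t, p i * a i - c := by
  simp only [mul_sub, Finset.sum_sub_distrib, ← Finset.sum_mul]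
  ring

theorem mechanism_to_scoring_rule_general
    (n : ℕ) (a : (Fin n → ℝ) → Fin n → ℝ) (P : (Fin n → ℝ) → ℝ)
    (D : Set (Fin n → ℝ))
    (htruth : ∀ x ∈ D, ∀ y ∈ D, y ≠ x →
      (∑ i, x i * a y i) - P y < (∑ i, x i * a x i) - P x)
    (s : (Fin n → ℝ) → Fin n → ℝ) (s₀ : (Fin n → ℝ) → ℝ)
    (hs : ∀ p i, s p i = a p i - P p)
    (hs₀ : ∀ p, s₀ p = -P p) :
    ∀ p ∈ D, ∀ q ∈ D, q ≠ p →
      (∑ i, p i * s q i) + (1 - ∑ i, p i) * s₀ q <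
      (∑ i, p i * s p i) + (1 - ∑ i, p i) * s₀ p := by
  intro p hp q hq hne
  simp only [hs, hs₀, Finset.sum_mul_sub_add_one_sub_sum_mul_neg]
  exact htruth p hp q hq hne

/-- If the mechanism `M = (a, P)` is strictly truthful on the
domain `D = {x | ∀ i, 0 ≤ x i ∧ ∑ x i ≤ 1}`, then the scoring rule `S(M)`
with `sᵢ(p) = aᵢ(p) - P(p)` for `i ≥ 1` and `s₀(p) = -P(p)` is strictly
proper: the expected score is strictly maximized by truthful reporting. -/
theorem mechanism_to_scoring_rule
    (n : ℕ) (a : (Fin n → ℝ) → Fin n → ℝ) (P : (Fin n → ℝ) → ℝ)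
    (D : Set (Fin n → ℝ))
    (hD : D = {x : Fin n → ℝ | (∀ i, 0 ≤ x i) ∧ ∑ i, x i ≤ 1})
    (htruth : ∀ x ∈ D, ∀ y ∈ D, y ≠ x →
      (∑ i, x i * a y i) - P y < (∑ i, x i * a x i) - P x)
    (s : (Fin n → ℝ) → Fin n → ℝ) (s₀ : (Fin n → ℝ) → ℝ)
    (hs : ∀ p i, s p i = a p i - P p)
    (hs₀ : ∀ p, s₀ p = -P p) :
    ∀ p ∈ D, ∀ q ∈ D, q ≠ p →
      (∑ i, p i * s q i) + (1 - ∑ i, p i) * s₀ q <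
      (∑ i, p i * s p i) + (1 - ∑ i, p i) * s₀ p :=
  mechanism_to_scoring_rule_general n a P D htruth s s₀ hs hs₀
end
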